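/- For any permutation invariant function f on multisets of size n from a countable domain, there exist functions ρ and φ such that f(X) = ρ(∑_{x∈X} φ(x)). -/

import Mathlib

/-! Send the elements of `𝒳` injectively to primes `p a` and take `φ a = log (p a)`. Then
`∑ i, φ (x i) = log ∏ i, p (x i)`, and by unique factorization this product determines the
multiset of entries of `x`, i.e. `x` up to a permutation. A permutation invariant `f` is therefore
constant on the fibres of the sum and factors through it. -/

open Finset

theorem exists_perm_comp_eq_of_map_eq {ι α : Type*} [Fintype ι] {x y : ι → α}
    (h : univ.val.map x = univ.val.map y) : ∃ σ : Equiv.Perm ι, y ∘ σ = x := by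
  classical
  have hfiber (a : α) : Fintype.card {i // x i = a} = Fintype.card {i // y i = a} := by
    have := congrArg (Multiset.count a) h
    simp only [Multiset.count_map, eq_comm (a := a)] at this
    simpa only [Fintype.card_subtype, Finset.card_def, Finset.filter_val] using this
  exact ⟨Equiv.ofFiberEquiv fun a => Fintype.equivOfCardEq (hfiber a),
    funext <| Equiv.ofFiberEquiv_map _⟩

theorem Function.factorsThrough_of_map_eq {ι α β γ : Type*} [Fintype ι]
    {f : (ι → α) → β} (hf : ∀ (σ : Equiv.Perm ι) (x : ι → α), f (x ∘ σ) = f x)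
    {S : (ι → α) → γ} (hS : ∀ x y, S x = S y → univ.val.map x = univ.val.map y) :
    Function.FactorsThrough f S := by
  intro x y hxy
  obtain ⟨σ, rfl⟩ := exists_perm_comp_eq_of_map_eq (hS y x hxy.symm)
  exact (hf σ x).symm

theorem Real.log_natCast_multiset_prod {s : Multiset ℕ} (hs : ∀ p ∈ s, p ≠ 0) :
    Real.log (s.prod : ℝ) = (s.map fun p : ℕ => Real.log p).sum := by
  rw [Nat.cast_multiset_prod, Real.log_multiset_prod, Multiset.map_map]
  · rfl
  · simpa using hs

theorem Multiset.eq_of_sum_map_log_eq {s t : Multiset ℕ} (hs : ∀ p ∈ s, p.Prime)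
    (ht : ∀ p ∈ t, p.Prime)
    (h : (s.map fun p : ℕ => Real.log p).sum = (t.map fun p : ℕ => Real.log p).sum) :
    s = t := by
  have hs' : ∀ p ∈ s, Prime p := fun p hp => (hs p hp).prime
  have ht' : ∀ p ∈ t, Prime p := fun p hp => (ht p hp).prime
  have hprod : s.prod = t.prod := by
    rw [← Real.log_natCast_multiset_prod fun p hp => (hs p hp).ne_zero,
      ← Real.log_natCast_multiset_prod fun p hp => (ht p hp).ne_zero] at h
    exact_mod_cast Real.log_injOn_pos
      (Set.mem_Ioi.2 (by exact_mod_cast Nat.pos_of_ne_zero (s.prod_ne_zero_of_prime hs')))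
      (Set.mem_Ioi.2 (by exact_mod_cast Nat.pos_of_ne_zero (t.prod_ne_zero_of_prime ht'))) h
  calc s = UniqueFactorizationMonoid.normalizedFactors s.prod :=
        (UniqueFactorizationMonoid.normalizedFactors_prod_of_prime hs').symm
    _ = t := by rw [hprod, UniqueFactorizationMonoid.normalizedFactors_prod_of_prime ht']

/-- DeepSets decomposition: every permutation invariant function of `n` elements
from a countable domain factors as `ρ (∑ i, φ (x i))`. -/
theorem stmt_10 {𝒳 : Type*} [Countable 𝒳] {n : ℕ}
    (f : (Fin n → 𝒳) → ℝ)
    (hf : ∀ (σ : Equiv.Perm (Fin n)) (x : Fin n → 𝒳), f (x ∘ σ) = f x) :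
    ∃ (φ : 𝒳 → ℝ) (ρ : ℝ → ℝ), ∀ x : Fin n → 𝒳, f x = ρ (∑ i, φ (x i)) := by
  obtain ⟨c, hc⟩ := Countable.exists_injective_nat 𝒳
  set p : 𝒳 → ℕ := fun a => Nat.nth Nat.Prime (c a)
  have hp : Function.Injective p := (Nat.nth_injective Nat.infinite_setOfPred_prime).comp hc
  have hprime (x : Fin n → 𝒳) : ∀ q ∈ univ.val.map (p ∘ x), q.Prime := by
    simp [p, Nat.prime_nth_prime]
  have hS : Function.FactorsThrough f fun x => ∑ i, Real.log (p (x i)) := by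
    refine Function.factorsThrough_of_map_eq hf fun x y hxy => Multiset.map_injective hp ?_
    simp only [Multiset.map_map]
    refine Multiset.eq_of_sum_map_log_eq (hprime x) (hprime y) ?_
    simp only [Multiset.map_map, sum_map_val]
    exact hxy
  exact ⟨fun a => Real.log (p a), Function.extend _ f 0, fun x => (hS.extend_apply 0 x).symm⟩
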